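/- Let H be a d×d symmetric positive definite real matrix, g ∈ ℝ^d, and ε ∈ (0, 1). Suppose H̃_1, …, H̃_m are symmetric positive definite matrices with (1−ε)H ⪯ H̃_i ⪯ (1+ε)H for every i ∈ [m] and (1/m)·Σ_{i=1}^m H̃_i = H. Let p* = H⁻¹g, p̃ = (1/m)·Σ_{i=1}^m H̃_i⁻¹g, and let H^{1/2} denote the positive semidefinite square root of H. Then ‖H^{1/2}(p̃ − p*)‖₂ ≤ (ε²/(1−ε))·‖H^{1/2}p*‖₂. -/

import Mathlib

open Matrix

noncomputable section

/-- The Euclidean (ℓ2) norm of a vector in `ℝ^d`. -/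
def norm2 {d : ℕ} (x : Fin d → ℝ) : ℝ := Real.sqrt (x ⬝ᵥ x)

section

open scoped ComplexOrder

/-- The positive semidefinite square root of a positive semidefinite matrix
(Mathlib's former `Matrix.PosSemidef.sqrt`, with its old definition). -/
def Matrix.PosSemidef.sqrt {n 𝕜 : Type*} [Fintype n] [RCLike 𝕜] [DecidableEq n]
    {A : Matrix n n 𝕜} (hA : A.PosSemidef) : Matrix n n 𝕜 :=
  hA.1.eigenvectorUnitary.1 * diagonal ((↑) ∘ (√·) ∘ hA.1.eigenvalues) *
    (star hA.1.eigenvectorUnitary : Matrix n n 𝕜)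

end

/-!
Whiten by `S = H^{1/2}`: the matrices `Aᵢ = S⁻¹ H̃ᵢ S⁻¹` satisfy `1 - ε ≤ Aᵢ ≤ 1 + ε`, average
to `1`, and `S (p̃ - p*) = (avg Aᵢ⁻¹ - 1) (S p*)`. Because the `Aᵢ - 1` average to zero,
`avg Aᵢ⁻¹ - 1 = avg (Aᵢ⁻¹ + Aᵢ - 2)`, and by the functional calculus each summand has operator norm
at most `sup (x⁻¹ + x - 2) = sup (x - 1)² / x ≤ ε² / (1 - ε)` over `x ∈ [1 - ε, 1 + ε]`.
-/

section

open scoped ComplexOrder MatrixOrder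

theorem Matrix.PosSemidef.sqrt_eq_cfcSqrt {n 𝕜 : Type*} [Fintype n] [RCLike 𝕜] [DecidableEq n]
    {A : Matrix n n 𝕜} (hA : A.PosSemidef) : hA.sqrt = CFC.sqrt A := by
  rw [CFC.sqrt_eq_real_sqrt A hA.nonneg, cfcₙ_eq_cfc, hA.1.cfc_eq]
  rfl

end

theorem abs_inv_add_sub_two_le {ε x : ℝ} (hε : ε < 1) (hlo : 1 - ε ≤ x) (hhi : x ≤ 1 + ε) :
    |x⁻¹ + x - 2| ≤ ε ^ 2 / (1 - ε) := by
  have hx : 0 < x := by linarith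
  have hid : x⁻¹ + x - 2 = (x - 1) ^ 2 / x := by field_simp; ring
  have hsq : (x - 1) ^ 2 ≤ ε ^ 2 := by nlinarith
  rw [hid, abs_of_nonneg (by positivity)]
  calc (x - 1) ^ 2 / x ≤ ε ^ 2 / x := by gcongr
    _ ≤ ε ^ 2 / (1 - ε) := by gcongr

section

open scoped Ring

variable {A : Type*} [NormedRing A] [StarRing A] [NormedAlgebra ℝ A] [StarModule ℝ A]
  [PartialOrder A] [StarOrderedRing A] [NonnegSpectrumClass ℝ A]
  [IsometricContinuousFunctionalCalculus ℝ A IsSelfAdjoint]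

theorem norm_ringInverse_add_sub_two_le {a : A} {ε : ℝ} (hε : ε < 1)
    (hlo : algebraMap ℝ A (1 - ε) ≤ a) (hhi : a ≤ algebraMap ℝ A (1 + ε)) :
    ‖a⁻¹ʳ + a - 2‖ ≤ ε ^ 2 / (1 - ε) := by
  have ha : IsSelfAdjoint a := by
    simpa using (sub_nonneg.mpr hlo).isSelfAdjoint.add (IsSelfAdjoint.algebraMap A (.all (1 - ε)))
  have hspec : ∀ x ∈ spectrum ℝ a, 1 - ε ≤ x ∧ x ≤ 1 + ε := fun x hx =>
    ⟨(algebraMap_le_iff_le_spectrum ha).1 hlo x hx, (le_algebraMap_iff_spectrum_le ha).1 hhi x hx⟩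
  have hunit : IsUnit a :=
    (spectrum.zero_notMem_iff ℝ).1 fun h0 => by linarith [(hspec 0 h0).1]
  have hinv : ContinuousOn (·⁻¹ : ℝ → ℝ) (spectrum ℝ a) :=
    continuousOn_inv₀.mono fun x hx => (by linarith [(hspec x hx).1] : (0 : ℝ) < x).ne'
  have hcfc : cfc (fun x : ℝ => x⁻¹ + x - 2) a = a⁻¹ʳ + a - 2 := by
    rw [cfc_sub (fun x : ℝ => x⁻¹ + x) (fun _ => 2) a, cfc_add a _ _ hinv,
      cfc_ringInverse_id a hunit, cfc_id' ℝ a, cfc_const 2 a, map_ofNat]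
  rw [← hcfc]
  exact norm_cfc_le (by positivity) fun x hx =>
    abs_inv_add_sub_two_le hε (hspec x hx).1 (hspec x hx).2

theorem norm_average_ringInverse_sub_one_le {m : ℕ} {a : Fin m → A} {ε : ℝ}
    (hε : ε < 1) (hlo : ∀ i, algebraMap ℝ A (1 - ε) ≤ a i)
    (hhi : ∀ i, a i ≤ algebraMap ℝ A (1 + ε)) (havg : ((1 : ℝ) / m) • ∑ i, a i = 1) :
    ‖((1 : ℝ) / m) • ∑ i, (a i)⁻¹ʳ - 1‖ ≤ ε ^ 2 / (1 - ε) := by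
  rcases Nat.eq_zero_or_pos m with rfl | hm
  · have : Subsingleton A := subsingleton_of_zero_eq_one (by simpa using havg)
    simpa [Subsingleton.elim _ (0 : A)] using div_nonneg (sq_nonneg ε) (by linarith)
  have hm' : (m : ℝ) ≠ 0 := by positivity
  have htwo : ((1 : ℝ) / m) • ∑ _i : Fin m, (2 : A) = 2 := by
    rw [Finset.sum_const, Finset.card_univ, Fintype.card_fin, ← Nat.cast_smul_eq_nsmul ℝ,
      smul_smul, one_div_mul_cancel hm', one_smul]
  have hsplit : ((1 : ℝ) / m) • ∑ i, (a i)⁻¹ʳ - 1 =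
      ((1 : ℝ) / m) • ∑ i, ((a i)⁻¹ʳ + a i - 2) := by
    rw [Finset.sum_sub_distrib, Finset.sum_add_distrib, smul_sub, smul_add, havg, htwo,
      ← one_add_one_eq_two]
    abel
  rw [hsplit, norm_smul, Real.norm_of_nonneg (by positivity)]
  calc (1 / m : ℝ) * ‖∑ i, ((a i)⁻¹ʳ + a i - 2)‖
      ≤ (1 / m : ℝ) * ∑ _i : Fin m, ε ^ 2 / (1 - ε) := by
        gcongr
        exact (norm_sum_le _ _).trans <| Finset.sum_le_sum fun i _ =>
          norm_ringInverse_add_sub_two_le hε (hlo i) (hhi i)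
    _ = ε ^ 2 / (1 - ε) := by
        rw [Finset.sum_const, Finset.card_univ, Fintype.card_fin, nsmul_eq_mul]
        field_simp

end

theorem mul_smul_mul_eq_algebraMap {A : Type*} [Ring A] [Algebra ℝ A] {t h : A}
    (hth : t * h * t = 1) (r : ℝ) : t * (r • h) * t = algebraMap ℝ A r := by
  rw [mul_smul_comm, smul_mul_assoc, hth, Algebra.algebraMap_eq_smul_one]

theorem Matrix.mulVec_average_inv_sub_inv {n 𝕜 : Type*} [Fintype n] [DecidableEq n] [Field 𝕜]
    {m : ℕ} {S H : Matrix n n 𝕜} (hS : IsUnit S.det) (hSH : S * S = H)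
    (X : Fin m → Matrix n n 𝕜) (g : n → 𝕜) :
    S *ᵥ ((((1 : 𝕜) / m) • ∑ i, (X i)⁻¹ *ᵥ g) - H⁻¹ *ᵥ g) =
      (((1 : 𝕜) / m) • ∑ i, (S⁻¹ * X i * S⁻¹)⁻¹ - 1) *ᵥ (S *ᵥ (H⁻¹ *ᵥ g)) := by
  have hSinv : S * S⁻¹ = 1 := mul_nonsing_inv S hS
  have hterm : ∀ i, (S⁻¹ * X i * S⁻¹)⁻¹ * S⁻¹ = S * (X i)⁻¹ := fun i => by
    rw [mul_inv_rev, mul_inv_rev, nonsing_inv_nonsing_inv S hS, Matrix.mul_assoc,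
      Matrix.mul_assoc, hSinv, Matrix.mul_one]
  have hH : S * H⁻¹ = S⁻¹ := by
    rw [← hSH, mul_inv_rev, ← Matrix.mul_assoc, hSinv, Matrix.one_mul]
  calc S *ᵥ ((((1 : 𝕜) / m) • ∑ i, (X i)⁻¹ *ᵥ g) - H⁻¹ *ᵥ g)
      = (S * (((1 : 𝕜) / m) • ∑ i, (X i)⁻¹ - H⁻¹)) *ᵥ g := by
        rw [← mulVec_mulVec, sub_mulVec, smul_mulVec, sum_mulVec]
    _ = ((((1 : 𝕜) / m) • ∑ i, (S⁻¹ * X i * S⁻¹)⁻¹ - 1) * S⁻¹) *ᵥ g := by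
        rw [Matrix.mul_sub, Matrix.mul_smul, Matrix.mul_sum, Matrix.sub_mul, Matrix.smul_mul,
          Finset.sum_mul, Matrix.one_mul, hH]
        simp only [hterm]
    _ = _ := by rw [← hH, ← mulVec_mulVec, ← mulVec_mulVec]

section

open scoped Matrix.Norms.L2Operator

theorem norm2_eq_norm_toLp {d : ℕ} (x : Fin d → ℝ) : norm2 x = ‖WithLp.toLp 2 x‖ := by
  rw [norm2, EuclideanSpace.norm_eq]
  simp [dotProduct, sq]

theorem norm2_mulVec_le {d : ℕ} (M : Matrix (Fin d) (Fin d) ℝ) (x : Fin d → ℝ) :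
    norm2 (M *ᵥ x) ≤ ‖M‖ * norm2 x := by
  rw [norm2_eq_norm_toLp, norm2_eq_norm_toLp]
  exact M.l2_opNorm_mulVec (WithLp.toLp 2 x)

end

open scoped Matrix.Norms.L2Operator MatrixOrder Ring in
theorem giant_model_average_weighted_bound_general {d m : ℕ}
    (H : Matrix (Fin d) (Fin d) ℝ) (hH : H.PosDef)
    (g : Fin d → ℝ) (ε : ℝ) (hε : 0 < ε ∧ ε < 1)
    (Htil : Fin m → Matrix (Fin d) (Fin d) ℝ)
    (happrox : ∀ i,
      (Htil i - (1 - ε) • H).PosSemidef ∧ ((1 + ε) • H - Htil i).PosSemidef)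
    (havg : ((1 : ℝ) / m) • ∑ i, Htil i = H) :
    norm2 (hH.posSemidef.sqrt *ᵥ ((((1 : ℝ) / m) • ∑ i, (Htil i)⁻¹ *ᵥ g) - H⁻¹ *ᵥ g)) ≤
      (ε ^ 2 / (1 - ε)) * norm2 (hH.posSemidef.sqrt *ᵥ (H⁻¹ *ᵥ g)) := by
  rw [hH.posSemidef.sqrt_eq_cfcSqrt]
  set S := CFC.sqrt H
  have hSS : S * S = H := CFC.sqrt_mul_sqrt_self H hH.posSemidef.nonneg
  have hS : IsUnit S.det := by
    rw [← isUnit_iff_isUnit_det, CFC.isUnit_sqrt_iff H hH.posSemidef.nonneg]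
    exact hH.isUnit
  have hT : IsSelfAdjoint S⁻¹ := (CFC.sqrt_nonneg H).isSelfAdjoint.isHermitian.inv
  have hTHT : S⁻¹ * H * S⁻¹ = 1 := by
    rw [← hSS, ← Matrix.mul_assoc, nonsing_inv_mul S hS, Matrix.one_mul, mul_nonsing_inv S hS]
  have hlo : ∀ i, algebraMap ℝ _ (1 - ε) ≤ S⁻¹ * Htil i * S⁻¹ := fun i =>
    mul_smul_mul_eq_algebraMap hTHT (1 - ε) ▸ hT.conjugate_le_conjugate (le_iff.mpr (happrox i).1)
  have hhi : ∀ i, S⁻¹ * Htil i * S⁻¹ ≤ algebraMap ℝ _ (1 + ε) := fun i =>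
    mul_smul_mul_eq_algebraMap hTHT (1 + ε) ▸ hT.conjugate_le_conjugate (le_iff.mpr (happrox i).2)
  have hwhite : ((1 : ℝ) / m) • ∑ i, S⁻¹ * Htil i * S⁻¹ = 1 := by
    rw [← Finset.sum_mul, ← Finset.mul_sum, ← Matrix.smul_mul, ← Matrix.mul_smul, havg, hTHT]
  have hnorm := norm_average_ringInverse_sub_one_le hε.2 hlo hhi hwhite
  simp only [← nonsing_inv_eq_ringInverse] at hnorm
  rw [S.mulVec_average_inv_sub_inv hS hSS]
  exact (norm2_mulVec_le _ _).trans (mul_le_mul_of_nonneg_right hnorm (Real.sqrt_nonneg _))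

/-- the averaged approximate Newton direction of GIANT is within
`ε²/(1−ε)` of the exact Newton direction `p* = H⁻¹g` in the `H`-weighted norm. -/
theorem giant_model_average_weighted_bound {d m : ℕ}
    (H : Matrix (Fin d) (Fin d) ℝ) (hH : H.PosDef)
    (g : Fin d → ℝ) (ε : ℝ) (hε : 0 < ε ∧ ε < 1)
    (Htil : Fin m → Matrix (Fin d) (Fin d) ℝ)
    (hHtilPD : ∀ i, (Htil i).PosDef)
    (happrox : ∀ i,
      (Htil i - (1 - ε) • H).PosSemidef ∧ ((1 + ε) • H - Htil i).PosSemidef)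
    (havg : ((1 : ℝ) / m) • ∑ i, Htil i = H) :
    norm2 (hH.posSemidef.sqrt *ᵥ ((((1 : ℝ) / m) • ∑ i, (Htil i)⁻¹ *ᵥ g) - H⁻¹ *ᵥ g)) ≤
      (ε ^ 2 / (1 - ε)) * norm2 (hH.posSemidef.sqrt *ᵥ (H⁻¹ *ᵥ g)) :=
  giant_model_average_weighted_bound_general H hH g ε hε Htil happrox havg
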